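/- Let s ∈ (0,1), μ > 2, and W ∈ C¹(ℝ×ℝⁿ, ℝ) satisfy the Ambrosetti–Rabinowitz condition 0 < μW(x,q) ≤ ∇_qW(x,q)·q for q ≠ 0. Let I(q) = (1/2)‖q‖²_{H̃^s} − ∫_ℝ W(x,q(x)) dx on H̃^s, and let ρ > 0. Then there exists q₀ ∈ H̃^s with ‖q₀‖_{H̃^s} > ρ and I(q₀) < 0. In fact, if q_♦ ∈ H̃^s has |q_♦| = 1 on (−1,1) and ω₁(x) := inf_{|ξ|=1} W(x,ξ), then I(t q_♦) ≤ (t²/2)‖q_♦‖²_{H̃^s} − t^μ ∫_{−1}^{1} ω₁(x) dx → −∞ as t → +∞. -/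

import Mathlib

open MeasureTheory ENNReal Filter Topology

/-- Squared Gagliardo double integral (without the constant `c_s`). -/
noncomputable def gagN (n : ℕ) (s : ℝ) (q : ℝ → EuclideanSpace ℝ (Fin n)) : ℝ≥0∞ :=
  ∫⁻ p : ℝ × ℝ, ENNReal.ofReal (‖q p.1 - q p.2‖ ^ 2 / |p.1 - p.2| ^ (1 + 2 * s))

/-- The pointwise quadratic form `L(x)v·v`. -/
noncomputable def Lform (n : ℕ) (L : ℝ → Matrix (Fin n) (Fin n) ℝ) (x : ℝ)
    (v : EuclideanSpace ℝ (Fin n)) : ℝ :=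
  ∑ i, ∑ k, L x i k * v i * v k

/-- The squared `H̃^s` norm `‖q‖² = c_s ∬ … + ∫ L q·q`. -/
noncomputable def nsq (n : ℕ) (s cs : ℝ) (L : ℝ → Matrix (Fin n) (Fin n) ℝ)
    (q : ℝ → EuclideanSpace ℝ (Fin n)) : ℝ :=
  cs * (gagN n s q).toReal + ∫ x : ℝ, Lform n L x (q x)

/-- The energy functional `I(q) = (1/2)‖q‖²_{H̃^s} − ∫ W(x,q(x)) dx`. -/
noncomputable def energy (n : ℕ) (s cs : ℝ) (L : ℝ → Matrix (Fin n) (Fin n) ℝ)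
    (W : ℝ → EuclideanSpace ℝ (Fin n) → ℝ) (q : ℝ → EuclideanSpace ℝ (Fin n)) : ℝ :=
  (1/2) * nsq n s cs L q - ∫ x : ℝ, W x (q x)

lemma lform_smul (n : ℕ) (L : ℝ → Matrix (Fin n) (Fin n) ℝ) (x t : ℝ)
    (v : EuclideanSpace ℝ (Fin n)) : Lform n L x (t • v) = t ^ 2 * Lform n L x v := by
  simp only [Lform, PiLp.smul_apply, smul_eq_mul, Finset.mul_sum]
  refine Finset.sum_congr rfl fun i _ => Finset.sum_congr rfl fun k _ => by ring

lemma gag_smul (n : ℕ) (s t : ℝ) (q : ℝ → EuclideanSpace ℝ (Fin n)) :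
    gagN n s (fun x => t • q x) = ENNReal.ofReal (t ^ 2) * gagN n s q := by
  unfold gagN
  rw [← lintegral_const_mul' _ _ ENNReal.ofReal_ne_top]
  congr 1
  funext p
  rw [← ENNReal.ofReal_mul (sq_nonneg t)]
  congr 1
  rw [← smul_sub, norm_smul, mul_pow, Real.norm_eq_abs, sq_abs, mul_div_assoc]

/-- scaling inequality from AR condition -/
lemma W_scale {n : ℕ} {μ : ℝ} (hμ : 2 < μ)
    {W : ℝ → EuclideanSpace ℝ (Fin n) → ℝ}
    (hWdiff : ∀ x : ℝ, Differentiable ℝ (W x))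
    (hAR : ∀ (x : ℝ) (v : EuclideanSpace ℝ (Fin n)), v ≠ 0 →
      0 < μ * W x v ∧ μ * W x v ≤ fderiv ℝ (W x) v v)
    (x : ℝ) (v : EuclideanSpace ℝ (Fin n)) (hv : v ≠ 0)
    {t : ℝ} (ht : 1 ≤ t) : t ^ μ * W x v ≤ W x (t • v) := by
  set g : ℝ → ℝ := fun u => W x (u • v) with hg
  have hgd : ∀ u : ℝ, HasDerivAt g (fderiv ℝ (W x) (u • v) v) u := by
    intro u
    have h1 : HasDerivAt (fun u : ℝ => u • v) ((1:ℝ) • v) u :=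
      (hasDerivAt_id u).smul_const v
    have := ((hWdiff x (u • v)).hasFDerivAt).comp_hasDerivAt u h1
    simp only [one_smul] at this; exact this
  set h : ℝ → ℝ := fun u => g u * u ^ (-μ) with hh
  have hmono : MonotoneOn h (Set.Ici (1:ℝ)) := by
    have hder : ∀ u : ℝ, 0 < u → HasDerivAt h
        (fderiv ℝ (W x) (u • v) v * u ^ (-μ) + g u * (-μ * u ^ (-μ - 1))) u := by
      intro u hu
      exact (hgd u).mul (Real.hasDerivAt_rpow_const (Or.inl hu.ne'))
    refine monotoneOn_of_deriv_nonneg (convex_Ici 1) ?_ ?_ ?_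
    · intro u hu
      exact ((hder u (lt_of_lt_of_le one_pos hu)).continuousAt).continuousWithinAt
    · intro u hu
      rw [interior_Ici] at hu
      exact ((hder u (lt_trans one_pos hu)).differentiableAt).differentiableWithinAt
    · intro u hu
      rw [interior_Ici] at hu
      have hu0 : (0:ℝ) < u := lt_trans one_pos hu
      rw [(hder u hu0).deriv]
      have hvne : u • v ≠ 0 := smul_ne_zero hu0.ne' hv
      have harr := (hAR x (u • v) hvne).2
      have hlin : fderiv ℝ (W x) (u • v) (u • v) = u * fderiv ℝ (W x) (u • v) v := by
        rw [_root_.map_smul]; simp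
      rw [hlin] at harr
      have hpow : u ^ (-μ) = u * u ^ (-μ - 1) := by
        have h2 : u ^ (-μ) = u ^ (1 + (-μ - 1)) := by norm_num
        rw [h2, Real.rpow_add hu0, Real.rpow_one]
      have hpos : (0:ℝ) < u ^ (-μ - 1) := Real.rpow_pos_of_pos hu0 _
      have key : fderiv ℝ (W x) (u • v) v * u ^ (-μ) + g u * (-μ * u ^ (-μ - 1))
          = (u * fderiv ℝ (W x) (u • v) v - μ * g u) * u ^ (-μ - 1) := by
        rw [hpow]; ring
      rw [key]
      have : μ * g u ≤ u * fderiv ℝ (W x) (u • v) v := harr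
      nlinarith
  have h1t : h 1 ≤ h t := hmono (Set.self_mem_Ici) (Set.mem_Ici.mpr ht) ht
  have ht0 : (0:ℝ) < t := lt_of_lt_of_le one_pos ht
  have h1 : h 1 = W x v := by simp [hh, hg]
  have htμ : (0:ℝ) < t ^ μ := Real.rpow_pos_of_pos ht0 _
  have hkey : t ^ (-μ) * t ^ μ = 1 := by
    rw [← Real.rpow_add ht0]; simp
  rw [h1] at h1t
  calc t ^ μ * W x v ≤ t ^ μ * (g t * t ^ (-μ)) :=
        mul_le_mul_of_nonneg_left h1t htμ.le
    _ = g t * (t ^ (-μ) * t ^ μ) := by ring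
    _ = W x (t • v) := by rw [hkey, mul_one]

lemma W_nonneg {n : ℕ} (hn : 1 ≤ n) {μ : ℝ} (hμ : 2 < μ)
    {W : ℝ → EuclideanSpace ℝ (Fin n) → ℝ}
    (hWdiff : ∀ x : ℝ, Differentiable ℝ (W x))
    (hAR : ∀ (x : ℝ) (v : EuclideanSpace ℝ (Fin n)), v ≠ 0 →
      0 < μ * W x v ∧ μ * W x v ≤ fderiv ℝ (W x) v v)
    (x : ℝ) (v : EuclideanSpace ℝ (Fin n)) : 0 ≤ W x v := by
  have hμ0 : (0:ℝ) < μ := by linarith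
  have hpos : ∀ w : EuclideanSpace ℝ (Fin n), w ≠ 0 → 0 < W x w := by
    intro w hw
    have := (hAR x w hw).1
    by_contra h
    push_neg at h
    nlinarith
  rcases eq_or_ne v 0 with rfl | hv
  · set e : EuclideanSpace ℝ (Fin n) := EuclideanSpace.single ⟨0, hn⟩ (1:ℝ) with he
    have hene : e ≠ 0 := by
      intro h
      have : e ⟨0, hn⟩ = 0 := by rw [h]; rfl
      rw [he, EuclideanSpace.single_apply] at this
      simp at this
    have htend : Tendsto (fun k : ℕ => W x ((1 / (k + 1 : ℝ)) • e)) atTop (𝓝 (W x 0)) := by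
      have h1 : Tendsto (fun k : ℕ => (1 / (k + 1 : ℝ)) • e) atTop (𝓝 ((0:ℝ) • e)) :=
        tendsto_one_div_add_atTop_nhds_zero_nat.smul_const e
      rw [zero_smul] at h1
      exact ((hWdiff x 0).continuousAt.tendsto).comp h1
    refine ge_of_tendsto' htend fun k => ?_
    have hne : (1 / (k + 1 : ℝ)) • e ≠ 0 := by
      apply smul_ne_zero _ hene
      positivity
    exact (hpos _ hne).le
  · exact (hpos v hv).le

/-- under the Ambrosetti–Rabinowitz condition, for any `ρ > 0` there is
`q₀ ∈ H̃^s` with `‖q₀‖_{H̃^s} > ρ` and `I(q₀) < 0`; in fact, for `q_♦ ∈ H̃^s` with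
`|q_♦| = 1` on `(−1,1)` and `ω₁(x) = inf_{|ξ|=1} W(x,ξ)`, one has
`I(t q_♦) ≤ (t²/2)‖q_♦‖² − t^μ ∫_{−1}^{1} ω₁(x) dx` for all `t ≥ 1`. -/
theorem mountain_pass_geometry_II
    (n : ℕ) (hn : 1 ≤ n) (s cs α μ ρ : ℝ) (hs : s ∈ Set.Ioo (0:ℝ) 1) (hcs : 0 < cs)
    (hα : 0 < α) (hμ : 2 < μ) (hρ : 0 < ρ)
    (L : ℝ → Matrix (Fin n) (Fin n) ℝ)
    (hLcont : ∀ i k, Continuous fun x : ℝ => L x i k)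
    (hLsymm : ∀ x : ℝ, (L x).IsSymm)
    (hLcoerc : ∀ (x : ℝ) (v : EuclideanSpace ℝ (Fin n)), α * ‖v‖ ^ 2 ≤ Lform n L x v)
    (W : ℝ → EuclideanSpace ℝ (Fin n) → ℝ)
    (hWdiff : ∀ x : ℝ, Differentiable ℝ (W x))
    (hWcont : Continuous fun p : ℝ × EuclideanSpace ℝ (Fin n) => W p.1 p.2)
    (hAR : ∀ (x : ℝ) (v : EuclideanSpace ℝ (Fin n)), v ≠ 0 →
      0 < μ * W x v ∧ μ * W x v ≤ fderiv ℝ (W x) v v)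
    (qd : ℝ → EuclideanSpace ℝ (Fin n))
    (hqdfin : gagN n s qd ≠ ⊤ ∧ Integrable (fun x : ℝ => Lform n L x (qd x)))
    (hqdnorm : ∀ x ∈ Set.Ioo (-1 : ℝ) 1, ‖qd x‖ = 1)
    (hqdW : ∀ t : ℝ, Integrable (fun x : ℝ => W x (t • qd x)))
    (ω₁ : ℝ → ℝ)
    (hω₁ : ∀ x : ℝ, ω₁ x =
      sInf ((fun ξ : EuclideanSpace ℝ (Fin n) => W x ξ) '' {ξ | ‖ξ‖ = 1})) :
    (∀ t : ℝ, 1 ≤ t →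
      energy n s cs L W (fun x => t • qd x)
        ≤ t ^ 2 / 2 * nsq n s cs L qd - t ^ μ * ∫ x in (-1:ℝ)..1, ω₁ x)
    ∧ ∃ q₀ : ℝ → EuclideanSpace ℝ (Fin n),
      gagN n s q₀ ≠ ⊤ ∧ Integrable (fun x : ℝ => Lform n L x (q₀ x))
      ∧ Integrable (fun x : ℝ => W x (q₀ x))
      ∧ ρ < Real.sqrt (nsq n s cs L q₀)
      ∧ energy n s cs L W q₀ < 0 := by
  have hSeq : {ξ : EuclideanSpace ℝ (Fin n) | ‖ξ‖ = 1}
      = Metric.sphere (0 : EuclideanSpace ℝ (Fin n)) 1 := by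
    ext ξ; simp [mem_sphere_zero_iff_norm]
  have hSc : IsCompact {ξ : EuclideanSpace ℝ (Fin n) | ‖ξ‖ = 1} := by
    rw [hSeq]; exact isCompact_sphere 0 1
  have hWx : ∀ x, Continuous (W x) := fun x => (hWdiff x).continuous
  have hω₁le : ∀ x (ξ : EuclideanSpace ℝ (Fin n)), ‖ξ‖ = 1 → ω₁ x ≤ W x ξ := by
    intro x ξ hξ
    rw [hω₁]
    exact csInf_le ((hSc.image (hWx x)).bddBelow) (Set.mem_image_of_mem _ hξ)
  have hSne : Set.Nonempty {ξ : EuclideanSpace ℝ (Fin n) | ‖ξ‖ = 1} := by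
    refine ⟨EuclideanSpace.single ⟨0, hn⟩ (1:ℝ), ?_⟩
    simp [EuclideanSpace.norm_single]
  have hω₁pos : ∀ x, 0 < ω₁ x := by
    intro x
    obtain ⟨ξ₀, hξ₀, heq⟩ := hSc.exists_sInf_image_eq hSne (hWx x).continuousOn
    rw [hω₁, heq]
    have hξne : ξ₀ ≠ 0 := by
      intro h; rw [h] at hξ₀; simp at hξ₀
    have := (hAR x ξ₀ hξne).1
    nlinarith
  have hω₁cont : Continuous ω₁ := by
    have h := hSc.continuous_sInf (f := fun x (ξ : EuclideanSpace ℝ (Fin n)) => W x ξ) hWcont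
    have heq : ω₁ = fun x => sInf ((fun ξ : EuclideanSpace ℝ (Fin n) => W x ξ)
        '' {ξ | ‖ξ‖ = 1}) := funext hω₁
    rw [heq]; exact h
  have hWnn := W_nonneg hn hμ hWdiff hAR
  have hnsq_smul : ∀ t : ℝ, nsq n s cs L (fun x => t • qd x) = t ^ 2 * nsq n s cs L qd := by
    intro t
    unfold nsq
    rw [gag_smul, ENNReal.toReal_mul, ENNReal.toReal_ofReal (sq_nonneg t)]
    have hint : (∫ x : ℝ, Lform n L x (t • qd x)) = t ^ 2 * ∫ x : ℝ, Lform n L x (qd x) := by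
      rw [← integral_const_mul]
      exact integral_congr_ae (ae_of_all _ fun x => lform_smul n L x t (qd x))
    rw [hint]; ring
  have hIoo : MeasurableSet (Set.Ioo (-1:ℝ) 1) := measurableSet_Ioo
  have hω₁int : IntegrableOn ω₁ (Set.Ioo (-1:ℝ) 1) :=
    (hω₁cont.continuousOn.integrableOn_compact isCompact_Icc).mono_set Set.Ioo_subset_Icc_self
  have hintv : (∫ x in (-1:ℝ)..1, ω₁ x) = ∫ x in Set.Ioo (-1:ℝ) 1, ω₁ x := by
    rw [intervalIntegral.integral_of_le (by norm_num), integral_Ioc_eq_integral_Ioo]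
  have part1 : ∀ t : ℝ, 1 ≤ t →
      energy n s cs L W (fun x => t • qd x)
        ≤ t ^ 2 / 2 * nsq n s cs L qd - t ^ μ * ∫ x in (-1:ℝ)..1, ω₁ x := by
    intro t ht
    have ht0 : (0:ℝ) < t := lt_of_lt_of_le one_pos ht
    have htμ : (0:ℝ) ≤ t ^ μ := (Real.rpow_pos_of_pos ht0 μ).le
    have hWint : (∫ x in Set.Ioo (-1:ℝ) 1, t ^ μ * ω₁ x)
        ≤ ∫ x in Set.Ioo (-1:ℝ) 1, W x (t • qd x) := by
      refine setIntegral_mono_on (hω₁int.const_mul _) ((hqdW t).integrableOn) hIoo ?_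
      intro x hx
      have h1 : ω₁ x ≤ W x (qd x) := hω₁le x (qd x) (hqdnorm x hx)
      have hne : qd x ≠ 0 := by
        intro h; have h' := hqdnorm x hx; rw [h] at h'; simp at h'
      calc t ^ μ * ω₁ x ≤ t ^ μ * W x (qd x) := mul_le_mul_of_nonneg_left h1 htμ
        _ ≤ W x (t • qd x) := W_scale hμ hWdiff hAR x (qd x) hne ht
    have hWall : (∫ x in Set.Ioo (-1:ℝ) 1, W x (t • qd x)) ≤ ∫ x, W x (t • qd x) :=
      setIntegral_le_integral (hqdW t) (ae_of_all _ fun x => hWnn x _)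
    have hfinal : t ^ μ * ∫ x in (-1:ℝ)..1, ω₁ x ≤ ∫ x, W x (t • qd x) := by
      rw [hintv, ← integral_const_mul]
      exact le_trans hWint hWall
    unfold energy
    rw [hnsq_smul t]
    linarith
  refine ⟨part1, ?_⟩
  set A := nsq n s cs L qd with hA_def
  set B := ∫ x in (-1:ℝ)..1, ω₁ x with hB_def
  have hB : 0 < B :=
    intervalIntegral.intervalIntegral_pos_of_pos_on
      (hω₁cont.intervalIntegrable _ _) (fun x _ => hω₁pos x) (by norm_num)
  have hLnn : ∀ x v, 0 ≤ Lform n L x v := fun x v => le_trans (by positivity) (hLcoerc x v)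
  have hA : 0 < A := by
    have h1 : (∫ _x in Set.Ioo (-1:ℝ) 1, (α : ℝ))
        ≤ ∫ x in Set.Ioo (-1:ℝ) 1, Lform n L x (qd x) := by
      refine setIntegral_mono_on (integrableOn_const ?_ enorm_ne_top) hqdfin.2.integrableOn hIoo ?_
      · rw [Real.volume_Ioo]; exact ENNReal.ofReal_ne_top
      · intro x hx
        have h := hLcoerc x (qd x)
        rw [hqdnorm x hx] at h
        simpa using h
    have h2 : (∫ x in Set.Ioo (-1:ℝ) 1, Lform n L x (qd x)) ≤ ∫ x, Lform n L x (qd x) :=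
      setIntegral_le_integral hqdfin.2 (ae_of_all _ fun x => hLnn x _)
    have h3 : (∫ _x in Set.Ioo (-1:ℝ) 1, (α : ℝ)) = 2 * α := by
      rw [setIntegral_const, measureReal_def, Real.volume_Ioo, smul_eq_mul]
      rw [ENNReal.toReal_ofReal (by norm_num)]
      norm_num
    have h4 : 0 ≤ cs * (gagN n s qd).toReal := mul_nonneg hcs.le ENNReal.toReal_nonneg
    rw [hA_def]; unfold nsq
    linarith
  have hsA : 0 < Real.sqrt A := Real.sqrt_pos.2 hA
  set c : ℝ := max (ρ / Real.sqrt A) ((A / (2 * B)) ^ (μ - 2)⁻¹) with hc_def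
  have hc0 : 0 ≤ c := le_trans (div_nonneg hρ.le hsA.le) (le_max_left _ _)
  set t := 1 + c with ht_def
  have ht1 : (1:ℝ) ≤ t := by simp [ht_def]; linarith
  have ht0 : (0:ℝ) < t := by linarith
  refine ⟨fun x => t • qd x, ?_, ?_, hqdW t, ?_, ?_⟩
  · rw [gag_smul]; exact ENNReal.mul_ne_top ENNReal.ofReal_ne_top hqdfin.1
  · refine (hqdfin.2.const_mul (t ^ 2)).congr ?_
    exact ae_of_all _ fun x => (lform_smul n L x t (qd x)).symm
  · rw [hnsq_smul t, Real.sqrt_mul (sq_nonneg t), Real.sqrt_sq ht0.le]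
    have h5 : ρ / Real.sqrt A < t :=
      lt_of_le_of_lt (le_trans (le_max_left _ _) (le_of_eq rfl)) (by rw [ht_def]; linarith [hc0])
    calc ρ = (ρ / Real.sqrt A) * Real.sqrt A := by field_simp
      _ < t * Real.sqrt A := mul_lt_mul_of_pos_right h5 hsA
  · have hub := part1 t ht1
    have hμ2 : (0:ℝ) < μ - 2 := by linarith
    have hc2 : (A / (2 * B)) ^ (μ - 2)⁻¹ < t :=
      lt_of_le_of_lt (le_max_right _ _) (by rw [ht_def]; linarith [hc0])
    have hAB : 0 ≤ A / (2 * B) := div_nonneg hA.le (by linarith)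
    have h6 : A / (2 * B) < t ^ (μ - 2) := by
      have h := Real.rpow_lt_rpow (Real.rpow_nonneg hAB _) hc2 hμ2
      rwa [← Real.rpow_mul hAB, inv_mul_cancel₀ hμ2.ne', Real.rpow_one] at h
    have h7 : t ^ μ = t ^ 2 * t ^ (μ - 2) := by
      rw [← Real.rpow_natCast t 2, ← Real.rpow_add ht0]; norm_num
    have h8 : t ^ 2 / 2 * A < t ^ μ * B := by
      rw [h7]
      have hmul : A / (2 * B) * B < t ^ (μ - 2) * B := mul_lt_mul_of_pos_right h6 hB
      have hid : A / (2 * B) * B = A / 2 := by field_simp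
      have ht2 : (0:ℝ) < t ^ 2 := by positivity
      calc t ^ 2 / 2 * A = t ^ 2 * (A / 2) := by ring
        _ < t ^ 2 * (t ^ (μ - 2) * B) := by
            apply mul_lt_mul_of_pos_left _ ht2
            rw [← hid]; exact hmul
        _ = t ^ 2 * t ^ (μ - 2) * B := by ring
    linarith
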